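/- Let T ≥ 1 and L ≥ 0 be natural numbers, let B ≥ 0 and K ≥ 0, and let g be a real-valued function of an (L+1)-tuple of d×d real matrices that is K-Lipschitz with respect to the sum of Frobenius distances, i.e. |g(A_0, …, A_L) − g(A'_0, …, A'_L)| ≤ K·∑_{l=0}^L ‖A_l − A'_l‖_F. For each l ∈ {0, …, L}, let h_{l,1}, …, h_{l,T+1} be vectors in ℝ^d with ‖h_{l,t}‖ ≤ B for all t, let Σ_l be the empirical covariance of h_{l,1}, …, h_{l,T}, and let Σ'_l be the empirical covariance of h_{l,1}, …, h_{l,T+1}. Then |g(Σ_0, …, Σ_L) − g(Σ'_0, …, Σ'_L)| ≤ 6(L+1)·K·B²/(T+1). -/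

import Mathlib

/-- The outer product `a bᵀ` of two vectors in `ℝ^d`, as a `d × d` matrix. -/
def outerProd {d : ℕ} (a b : EuclideanSpace ℝ (Fin d)) :
    Matrix (Fin d) (Fin d) ℝ :=
  Matrix.of fun i j => a i * b j

/-- The Frobenius norm of a `d × d` real matrix. -/
noncomputable def frobNorm {d : ℕ} (M : Matrix (Fin d) (Fin d) ℝ) : ℝ :=
  Real.sqrt (∑ i, ∑ j, (M i j) ^ 2)

/-- The empirical covariance `(1/T)·∑_{t=1}^T (h_t − h̄)(h_t − h̄)ᵀ` of the
vectors `h 1, …, h T`. -/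
noncomputable def empCov {d : ℕ} (T : ℕ) (h : ℕ → EuclideanSpace ℝ (Fin d)) :
    Matrix (Fin d) (Fin d) ℝ :=
  (T : ℝ)⁻¹ • ∑ t ∈ Finset.Icc 1 T,
    outerProd (h t - (T : ℝ)⁻¹ • ∑ s ∈ Finset.Icc 1 T, h s)
      (h t - (T : ℝ)⁻¹ • ∑ s ∈ Finset.Icc 1 T, h s)

/-! Write `Σ_T = mean_T(h hᵀ) − m_T m_Tᵀ` with `m_T` the mean of the first `T` vectors.
Appending `h_{T+1}` moves any sample mean by `(mean_T − h_{T+1})/(T+1)`, hence by at most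
`2C/(T+1)` when all samples have norm `≤ C`. Applied to `h hᵀ` (`C = B²`) and to `h` (`C = B`,
then `‖m mᵀ − m' m'ᵀ‖ ≤ (‖m‖ + ‖m'‖)‖m − m'‖`), this moves each `Σ_l` by at most `6B²/(T+1)`
in Frobenius norm; the Lipschitz bound sums this over the `L + 1` layers. -/

open Finset
open scoped Matrix.Norms.Frobenius

/-- Junk value `sampleMean 0 f = 0`, matching `empCov 0 h = 0`. -/
noncomputable def sampleMean {E : Type*} [AddCommGroup E] [Module ℝ E] (T : ℕ) (f : ℕ → E) : E :=
  (T : ℝ)⁻¹ • ∑ t ∈ Icc 1 T, f t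

section Module

variable {E : Type*} [AddCommGroup E] [Module ℝ E]

theorem natCast_smul_sampleMean (T : ℕ) (f : ℕ → E) :
    (T : ℝ) • sampleMean T f = ∑ t ∈ Icc 1 T, f t := by
  rcases T.eq_zero_or_pos with rfl | hT
  · simp
  · exact smul_inv_smul₀ (by positivity) _

theorem sampleMean_sub_sampleMean_succ (T : ℕ) (f : ℕ → E) :
    sampleMean T f - sampleMean (T + 1) f = ((T : ℝ) + 1)⁻¹ • (sampleMean T f - f (T + 1)) := by
  have hsucc :
      sampleMean (T + 1) f = ((T : ℝ) + 1)⁻¹ • ((T : ℝ) • sampleMean T f + f (T + 1)) := by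
    rw [natCast_smul_sampleMean, ← sum_Icc_succ_top (by omega), sampleMean]
    push_cast
    rfl
  have hT : (T : ℝ) + 1 ≠ 0 := by positivity
  rw [hsucc]
  match_scalars <;> field_simp
  ring

end Module

section Normed

variable {E : Type*} [NormedAddCommGroup E] [NormedSpace ℝ E]

theorem norm_sampleMean_le {T : ℕ} {f : ℕ → E} {C : ℝ} (hC : 0 ≤ C)
    (hf : ∀ t ∈ Icc 1 T, ‖f t‖ ≤ C) : ‖sampleMean T f‖ ≤ C := by
  rcases T.eq_zero_or_pos with rfl | hT
  · simpa [sampleMean] using hC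
  have hT' : (0 : ℝ) < T := by exact_mod_cast hT
  calc ‖sampleMean T f‖ ≤ (T : ℝ)⁻¹ * ∑ t ∈ Icc 1 T, ‖f t‖ := by
        rw [sampleMean, norm_smul, Real.norm_of_nonneg (by positivity)]
        gcongr
        exact norm_sum_le _ _
    _ ≤ (T : ℝ)⁻¹ * (T * C) := by
        gcongr
        simpa using sum_le_sum hf
    _ = C := by field_simp

theorem norm_sampleMean_sub_sampleMean_succ_le {T : ℕ} {f : ℕ → E} {C : ℝ}
    (hf : ∀ t ∈ Icc 1 (T + 1), ‖f t‖ ≤ C) :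
    ‖sampleMean T f - sampleMean (T + 1) f‖ ≤ 2 * C / ((T : ℝ) + 1) := by
  have hC : 0 ≤ C := (norm_nonneg _).trans (hf 1 (by simp))
  have hmean : ‖sampleMean T f‖ ≤ C :=
    norm_sampleMean_le hC fun t ht => hf t (Icc_subset_Icc_right T.le_succ ht)
  have hlast : ‖f (T + 1)‖ ≤ C := hf (T + 1) (by simp)
  rw [sampleMean_sub_sampleMean_succ, norm_smul, Real.norm_of_nonneg (by positivity),
    inv_mul_eq_div]
  gcongr
  linarith [norm_sub_le (sampleMean T f) (f (T + 1))]

end Normed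

section Matrix

variable {d : ℕ}

theorem frobNorm_eq_norm (M : Matrix (Fin d) (Fin d) ℝ) : frobNorm M = ‖M‖ := by
  simp [frobNorm, Matrix.frobenius_norm_def, Real.sqrt_eq_rpow]

theorem outerProd_eq_replicateCol_mul_replicateRow (a b : EuclideanSpace ℝ (Fin d)) :
    outerProd a b = Matrix.replicateCol (Fin 1) a.ofLp * Matrix.replicateRow (Fin 1) b.ofLp := by
  ext i j
  simp [outerProd, Matrix.mul_apply]

theorem norm_outerProd_le (a b : EuclideanSpace ℝ (Fin d)) : ‖outerProd a b‖ ≤ ‖a‖ * ‖b‖ := by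
  rw [outerProd_eq_replicateCol_mul_replicateRow]
  exact (Matrix.frobenius_norm_mul _ _).trans_eq <| congr_arg₂ (· * ·)
    (Matrix.frobenius_norm_replicateCol _) (Matrix.frobenius_norm_replicateRow _)

theorem outerProd_self_sub_outerProd_self (a b : EuclideanSpace ℝ (Fin d)) :
    outerProd a a - outerProd b b = outerProd a (a - b) + outerProd (a - b) b := by
  ext i j
  simp only [outerProd, Matrix.sub_apply, Matrix.add_apply, Matrix.of_apply, PiLp.sub_apply]
  ring

theorem norm_outerProd_self_sub_outerProd_self_le (a b : EuclideanSpace ℝ (Fin d)) :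
    ‖outerProd a a - outerProd b b‖ ≤ (‖a‖ + ‖b‖) * ‖a - b‖ := by
  rw [outerProd_self_sub_outerProd_self]
  calc _ ≤ ‖a‖ * ‖a - b‖ + ‖a - b‖ * ‖b‖ :=
        (norm_add_le _ _).trans (add_le_add (norm_outerProd_le _ _) (norm_outerProd_le _ _))
    _ = _ := by ring

theorem empCov_eq_sampleMean_sub_outerProd (T : ℕ) (h : ℕ → EuclideanSpace ℝ (Fin d)) :
    empCov T h = sampleMean T (fun t => outerProd (h t) (h t))
      - outerProd (sampleMean T h) (sampleMean T h) := by
  ext i j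
  rcases T.eq_zero_or_pos with rfl | hT
  · simp [empCov, sampleMean, outerProd]
  have hT' : (T : ℝ) ≠ 0 := by positivity
  simp only [empCov, sampleMean, outerProd, Matrix.sub_apply, Matrix.smul_apply, Matrix.sum_apply,
    Matrix.of_apply, PiLp.sub_apply, PiLp.smul_apply, smul_eq_mul, WithLp.ofLp_sum,
    Finset.sum_apply]
  simp only [sub_mul, mul_sub, sum_sub_distrib, ← mul_sum, ← sum_mul, sum_const, Nat.card_Icc,
    Nat.add_sub_cancel, nsmul_eq_mul]
  field_simp
  ring

theorem frobNorm_empCov_sub_empCov_succ_le {T : ℕ} {B : ℝ} {h : ℕ → EuclideanSpace ℝ (Fin d)}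
    (hh : ∀ t ∈ Icc 1 (T + 1), ‖h t‖ ≤ B) :
    frobNorm (empCov T h - empCov (T + 1) h) ≤ 6 * B ^ 2 / ((T : ℝ) + 1) := by
  have hB : 0 ≤ B := (norm_nonneg _).trans (hh 1 (by simp))
  set m := sampleMean T h
  set m' := sampleMean (T + 1) h
  have hm : ‖m‖ ≤ B := norm_sampleMean_le hB fun t ht => hh t (Icc_subset_Icc_right T.le_succ ht)
  have hm' : ‖m'‖ ≤ B := norm_sampleMean_le hB hh
  have hmm' : ‖m - m'‖ ≤ 2 * B / ((T : ℝ) + 1) := norm_sampleMean_sub_sampleMean_succ_le hh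
  have hhh : ∀ t ∈ Icc 1 (T + 1), ‖outerProd (h t) (h t)‖ ≤ B ^ 2 := fun t ht =>
    (norm_outerProd_le _ _).trans (by rw [sq]; exact mul_self_le_mul_self (norm_nonneg _) (hh t ht))
  have hsecond := norm_sampleMean_sub_sampleMean_succ_le hhh
  rw [frobNorm_eq_norm, empCov_eq_sampleMean_sub_outerProd, empCov_eq_sampleMean_sub_outerProd]
  calc _ = ‖(sampleMean T (fun t => outerProd (h t) (h t))
          - sampleMean (T + 1) (fun t => outerProd (h t) (h t)))
          - (outerProd m m - outerProd m' m')‖ := by congr 1; abel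
    _ ≤ 2 * B ^ 2 / ((T : ℝ) + 1) + (B + B) * (2 * B / ((T : ℝ) + 1)) := by
        refine (norm_sub_le _ _).trans (add_le_add hsecond ?_)
        refine (norm_outerProd_self_sub_outerProd_self_le m m').trans ?_
        gcongr
    _ = 6 * B ^ 2 / ((T : ℝ) + 1) := by ring

end Matrix

theorem lipschitz_of_empCov_shift_le_general (d T L : ℕ) (B K : ℝ)
    (hK : 0 ≤ K)
    (g : (Fin (L + 1) → Matrix (Fin d) (Fin d) ℝ) → ℝ)
    (hg : ∀ A A' : Fin (L + 1) → Matrix (Fin d) (Fin d) ℝ,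
      |g A - g A'| ≤ K * ∑ l, frobNorm (A l - A' l))
    (h : Fin (L + 1) → ℕ → EuclideanSpace ℝ (Fin d))
    (hbound : ∀ l, ∀ t ∈ Finset.Icc 1 (T + 1), ‖h l t‖ ≤ B) :
    |g (fun l => empCov T (h l)) - g (fun l => empCov (T + 1) (h l))|
      ≤ 6 * ((L : ℝ) + 1) * K * B ^ 2 / ((T : ℝ) + 1) := by
  calc _ ≤ K * ∑ l, frobNorm (empCov T (h l) - empCov (T + 1) (h l)) := hg _ _
    _ ≤ K * ∑ _l : Fin (L + 1), 6 * B ^ 2 / ((T : ℝ) + 1) := by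
        gcongr with l
        exact frobNorm_empCov_sub_empCov_succ_le (hbound l)
    _ = 6 * ((L : ℝ) + 1) * K * B ^ 2 / ((T : ℝ) + 1) := by
        simp only [sum_const, card_univ, Fintype.card_fin, nsmul_eq_mul]
        push_cast
        ring

/-- a `K`-Lipschitz (sum of Frobenius distances) function of the
per-layer covariances `(Σ_0, …, Σ_L)` changes by at most `6(L+1)KB²/(T+1)`
when one vector is appended to each layer. -/
theorem lipschitz_of_empCov_shift_le (d T L : ℕ) (hT : 1 ≤ T) (B K : ℝ)
    (hB : 0 ≤ B) (hK : 0 ≤ K)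
    (g : (Fin (L + 1) → Matrix (Fin d) (Fin d) ℝ) → ℝ)
    (hg : ∀ A A' : Fin (L + 1) → Matrix (Fin d) (Fin d) ℝ,
      |g A - g A'| ≤ K * ∑ l, frobNorm (A l - A' l))
    (h : Fin (L + 1) → ℕ → EuclideanSpace ℝ (Fin d))
    (hbound : ∀ l, ∀ t ∈ Finset.Icc 1 (T + 1), ‖h l t‖ ≤ B) :
    |g (fun l => empCov T (h l)) - g (fun l => empCov (T + 1) (h l))|
      ≤ 6 * ((L : ℝ) + 1) * K * B ^ 2 / ((T : ℝ) + 1) :=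
  lipschitz_of_empCov_shift_le_general d T L B K hK g hg h hbound
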